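/- arXiv:1710.00089 — 5 statements merged into one kernel-verified Lean document; each statement's English description precedes it below -/
import Mathlib

section
/- Every C-type lattice is indecomposable; that is, a C-type lattice is not isometric to an orthogonal direct sum L_1 ⊕ L_2 of two nontrivial lattices. -/
namespace Prism

/-- Gram matrix of a C-type lattice with parameters `a 1, …, a n` (vertices `x_0, …, x_n`). -/
def CGram (n : ℕ) (a : ℕ → ℤ) : Fin (n + 1) → Fin (n + 1) → ℤ := fun i j =>
  if (i : ℕ) = (j : ℕ) then (if (i : ℕ) = 0 then 4 else a (i : ℕ))
  else if ((i : ℕ) = 0 ∧ (j : ℕ) = 1) ∨ ((i : ℕ) = 1 ∧ (j : ℕ) = 0) then -2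
  else if (i : ℕ) + 1 = (j : ℕ) ∨ (j : ℕ) + 1 = (i : ℕ) then -1
  else 0

/-- The symmetric bilinear form of a C-type lattice. -/
def CForm (n : ℕ) (a : ℕ → ℤ) (v w : Fin (n + 1) → ℤ) : ℤ :=
  ∑ i : Fin (n + 1), ∑ j : Fin (n + 1), v i * CGram n a i j * w j

/-- Conditions on the parameters of a C-type lattice: `n ≥ 1`, all `a_i ≥ 2`, `a_1 ≥ 3`. -/
def CTypeParams (n : ℕ) (a : ℕ → ℤ) : Prop :=
  1 ≤ n ∧ (∀ i, 1 ≤ i → i ≤ n → 2 ≤ a i) ∧ 3 ≤ a 1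

/-- Numerator/denominator pair of the Hirzebruch–Jung continued fraction `[a_1, …, a_k]⁻`. -/
def hjPair : List ℤ → ℤ × ℤ
  | [] => (1, 0)
  | x :: l => (x * (hjPair l).1 - (hjPair l).2, (hjPair l).1)

/-- `a 1, …, a n` are the coefficients of the HJ expansion of `(2q-p)/(q-p)`, all `≥ 2`
(`a_1 ≥ 3` being forced since `q > p`); i.e. the data defining the lattice `C(p,q)`. -/
def IsCpq (p q : ℤ) (n : ℕ) (a : ℕ → ℤ) : Prop :=
  CTypeParams n a ∧ hjPair ((List.range' 1 n).map fun i => a i) = (2 * q - p, q - p)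

/-- Standard dot product on `ℤ^m`. -/
def dotF {m : ℕ} (v w : Fin m → ℤ) : ℤ := ∑ i, v i * w i

/-- Orthogonal complement of `σ` in `ℤ^m`. -/
def perp {m : ℕ} (σ : Fin m → ℤ) : Submodule ℤ (Fin m → ℤ) where
  carrier := {v | dotF v σ = 0}
  add_mem' := by
    intro a b ha hb
    simp only [Set.mem_setOf_eq, dotF, Pi.add_apply, add_mul, Finset.sum_add_distrib] at *
    omega
  zero_mem' := by simp [dotF]
  smul_mem' := by
    intro c v hv
    simp only [Set.mem_setOf_eq, dotF, Pi.smul_apply, smul_eq_mul, mul_assoc] at *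
    rw [← Finset.mul_sum, hv, mul_zero]

/-- Changemaker vector in `ℤ^m`. -/
def IsChangemaker (m : ℕ) (σ : Fin m → ℤ) : Prop :=
  Monotone σ ∧ (∀ i, 0 ≤ σ i) ∧
    ∀ k : ℤ, 0 ≤ k → k ≤ ∑ i, σ i → ∃ S : Finset (Fin m), k = ∑ i ∈ S, σ i

/-- The interval `x_a + x_{a+1} + ⋯ + x_b` in a C-type lattice of rank `n+1`. -/
def intVec (n : ℕ) (a b : ℕ) : Fin (n + 1) → ℤ := fun i =>
  if a ≤ (i : ℕ) ∧ (i : ℕ) ≤ b then 1 else 0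

/-- Breakability with respect to the C-type form. -/
def CBreakable (n : ℕ) (a : ℕ → ℤ) (ℓ : Fin (n + 1) → ℤ) : Prop :=
  ∃ x y : Fin (n + 1) → ℤ, ℓ = x + y ∧ 3 ≤ CForm n a x x ∧ 3 ≤ CForm n a y y ∧
    CForm n a x y = -1

/-- Breakability inside the lattice `(σ)^⊥ ⊆ ℤ^m`. -/
def PerpBreakable {m : ℕ} (σ : Fin m → ℤ) (ℓ : Fin m → ℤ) : Prop :=
  ∃ x y : Fin m → ℤ, x ∈ perp σ ∧ y ∈ perp σ ∧ ℓ = x + y ∧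
    3 ≤ dotF x x ∧ 3 ≤ dotF y y ∧ dotF x y = -1

/-- The number `δ([I],[J])` of dangling edges for intervals `[a,b]` and `[c,d]`,
counted with multiplicity (the edge `x_0x_1` is doubled). -/
def deltaCount (n a b c d : ℕ) : ℤ :=
  ∑ k ∈ Finset.range n,
    if (((a ≤ k ∧ k ≤ b) ∧ (c ≤ k + 1 ∧ k + 1 ≤ d)) ∨
          ((c ≤ k ∧ k ≤ d) ∧ (a ≤ k + 1 ∧ k + 1 ≤ b))) ∧
        (¬((a ≤ k ∧ k ≤ b) ∧ (c ≤ k ∧ k ≤ d)) ∨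
          ¬((a ≤ k + 1 ∧ k + 1 ≤ b) ∧ (c ≤ k + 1 ∧ k + 1 ≤ d)))
    then (if k = 0 then 2 else 1) else 0

/-- `v_j` is tight: `σ_j = 1 + σ_0 + ⋯ + σ_{j-1}`. -/
def IsTight {m : ℕ} (σ : Fin m → ℤ) (j : Fin m) : Prop :=
  σ j = 1 + ∑ i ∈ Finset.Iio j, σ i

/-- The vector `2e_0 + e_1 + ⋯ + e_{j-1} - e_j`. -/
def tightVec (m : ℕ) (j : Fin m) : Fin m → ℤ := fun i =>
  if i = j then -1 else if i < j then (if (i : ℕ) = 0 then 2 else 1) else 0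

/-- `A ⊆ {0,…,j-1}` with `σ_j = ∑_{i ∈ A} σ_i`, maximizing `∑_{i ∈ A} 2^i`. -/
def MaxSubsetRep {m : ℕ} (σ : Fin m → ℤ) (j : Fin m) (A : Finset (Fin m)) : Prop :=
  A ⊆ Finset.Iio j ∧ σ j = ∑ i ∈ A, σ i ∧
    ∀ B ⊆ Finset.Iio j, σ j = ∑ i ∈ B, σ i →
      ∑ i ∈ B, 2 ^ (i : ℕ) ≤ ∑ i ∈ A, 2 ^ (i : ℕ)

/-- The vector `∑_{i ∈ A} e_i - e_j`. -/
def subsetVec (m : ℕ) (A : Finset (Fin m)) (j : Fin m) : Fin m → ℤ := fun i =>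
  if i = j then -1 else if i ∈ A then 1 else 0

/-- `v` is the standard basis vector `v_j` of the changemaker lattice `(σ)^⊥`. -/
def IsStdBasisVec {m : ℕ} (σ : Fin m → ℤ) (j : Fin m) (v : Fin m → ℤ) : Prop :=
  (IsTight σ j ∧ v = tightVec m j) ∨
    (¬IsTight σ j ∧ ∃ A : Finset (Fin m), MaxSubsetRep σ j A ∧ v = subsetVec m A j)

/-- The subset `A` has a gappy index for `v_j`: some `i ∈ A` with `i < j - 1`, `i + 1 ∉ A`. -/
def IsGappyAt {m : ℕ} (A : Finset (Fin m)) (j : Fin m) : Prop :=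
  ∃ i ∈ A, (i : ℕ) + 1 < (j : ℕ) ∧ ∀ i' ∈ A, (i' : ℕ) ≠ (i : ℕ) + 1

/-- The reflection about `x_0^⊥` (using that `⟨x_0, v⟩` is always even and `⟨x_0,x_0⟩ = 4`). -/
def cRefl (n : ℕ) (a : ℕ → ℤ) (v : Fin (n + 1) → ℤ) : Fin (n + 1) → ℤ :=
  v - (CForm n a (Pi.single 0 1) v / 2) • Pi.single 0 1

/-!
Write `⟨u, v⟩ = ∑ uᵢ gᵢⱼ vⱼ` for the Gram matrix `g` of the vertex basis and `rᵢ = ∑ⱼ gᵢⱼ` for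
its row sums. By symmetry, `2⟨u, v⟩ = 2 ∑ rᵢ uᵢ vᵢ - ∑ gᵢⱼ (uᵢ - uⱼ)(vᵢ - vⱼ)`. The off-diagonal
entries are `≤ 0` and the row sums `≥ 0`, positive at both ends `x₀`, `xₙ` of the path. If
`u + v = x_k` with `⟨u, v⟩ = 0`, every term above has the same sign, so all vanish: `u` is constant
along the edges of the path avoiding `x_k` and zero at its ends, hence `u` or `v` is `0`. So in an
orthogonal splitting `L₁ ⊕ L₂` each vertex lies in one summand, adjacent (non-orthogonal)
vertices lie in the same one, and then the whole lattice lies in one summand.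
-/
section LaplacianForm

variable {ι : Type*} [Fintype ι] {G : ι → ι → ℤ}

lemma two_mul_sum_sum_eq_diag_sub_edge (hG : ∀ i j, G i j = G j i) (u v : ι → ℤ) :
    2 * ∑ i, ∑ j, u i * G i j * v j =
      2 * ∑ i, (∑ j, G i j) * (u i * v i) - ∑ i, ∑ j, G i j * ((u i - u j) * (v i - v j)) := by
  have hdiag : ∑ i, ∑ j, G i j * (u j * v j) = ∑ i, (∑ j, G i j) * (u i * v i) := by
    rw [Finset.sum_comm]
    simp only [Finset.sum_mul, hG]
  have hcross : ∑ i, ∑ j, G i j * (u j * v i) = ∑ i, ∑ j, u i * G i j * v j := by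
    rw [Finset.sum_comm]
    refine Finset.sum_congr rfl fun i _ => Finset.sum_congr rfl fun j _ => ?_
    rw [hG]
    ring
  have hexpand : ∀ i j, G i j * ((u i - u j) * (v i - v j)) =
      G i j * (u i * v i) + G i j * (u j * v j) - u i * G i j * v j - G i j * (u j * v i) :=
    fun i j => by ring
  simp only [hexpand, Finset.sum_sub_distrib, Finset.sum_add_distrib, ← Finset.sum_mul, hdiag,
    hcross]
  ring

lemma mul_nonpos_of_abs_add_le_one {s t : ℤ} (h : |s + t| ≤ 1) : s * t ≤ 0 := by
  rcases abs_le.1 h with ⟨h₁, h₂⟩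
  have := Int.le_self_sq s
  have := Int.le_self_sq (-s)
  obtain hst | hst | hst : s + t = -1 ∨ s + t = 0 ∨ s + t = 1 := by omega
  all_goals rw [eq_sub_of_add_eq' hst]; nlinarith

/-- All terms of `two_mul_sum_sum_eq_diag_sub_edge` have the same sign, hence vanish. -/
theorem diag_and_edge_terms_eq_zero_of_orthogonal (hG : ∀ i j, G i j = G j i)
    (hoff : ∀ i j, i ≠ j → G i j ≤ 0) (hrow : ∀ i, 0 ≤ ∑ j, G i j) {u v : ι → ℤ}
    (huv : ∀ i, u i + v i = 0 ∨ u i + v i = 1) (h : ∑ i, ∑ j, u i * G i j * v j = 0) :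
    (∀ i, (∑ j, G i j) * (u i * v i) = 0) ∧ ∀ i j, G i j * ((u i - u j) * (v i - v j)) = 0 := by
  have hvert : ∀ i, (∑ j, G i j) * (u i * v i) ≤ 0 := fun i =>
    mul_nonpos_of_nonneg_of_nonpos (hrow i)
      (mul_nonpos_of_abs_add_le_one (by rcases huv i with h | h <;> simp [h]))
  have hedge : ∀ i j, 0 ≤ G i j * ((u i - u j) * (v i - v j)) := by
    intro i j
    obtain rfl | hij := eq_or_ne i j
    · simp
    refine mul_nonneg_of_nonpos_of_nonpos (hoff i j hij) (mul_nonpos_of_abs_add_le_one ?_)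
    rw [sub_add_sub_comm, abs_le]
    rcases huv i with hi | hi <;> rcases huv j with hj | hj <;> constructor <;> linarith
  have hvert_sum := Finset.sum_nonpos fun i (_ : i ∈ Finset.univ) => hvert i
  have hedge_sum := Finset.sum_nonneg fun i (_ : i ∈ Finset.univ) =>
    Finset.sum_nonneg fun j (_ : j ∈ Finset.univ) => hedge i j
  have hid := two_mul_sum_sum_eq_diag_sub_edge hG u v
  rw [h] at hid
  refine ⟨fun i => ?_, fun i j => ?_⟩
  · exact (Finset.sum_eq_zero_iff_of_nonpos fun i _ => hvert i).1 (by linarith) i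
      (Finset.mem_univ i)
  · exact (Finset.sum_eq_zero_iff_of_nonneg fun j _ => hedge i j).1
      ((Finset.sum_eq_zero_iff_of_nonneg fun i _ => Finset.sum_nonneg fun j _ => hedge i j).1
        (by linarith) i (Finset.mem_univ i)) j (Finset.mem_univ j)

end LaplacianForm

section CGram

variable {n : ℕ} {a : ℕ → ℤ}

lemma cGram_comm (i j : Fin (n + 1)) : CGram n a i j = CGram n a j i := by
  obtain rfl | hij := eq_or_ne i j
  · rfl
  have : (i : ℕ) ≠ j := Fin.val_ne_of_ne hij
  unfold CGram
  split_ifs <;> omega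

lemma cGram_nonpos_of_ne {i j : Fin (n + 1)} (hij : i ≠ j) : CGram n a i j ≤ 0 := by
  have : (i : ℕ) ≠ j := Fin.val_ne_of_ne hij
  unfold CGram
  split_ifs <;> omega

lemma cGram_castSucc_succ_neg (i : Fin n) : CGram n a i.castSucc i.succ < 0 := by
  unfold CGram
  split_ifs <;> simp_all

lemma cGram_self_pos (hC : CTypeParams n a) (k : Fin (n + 1)) : 0 < CGram n a k k := by
  have := hC.2.1 k
  have := k.is_le
  unfold CGram
  split_ifs <;> omega

lemma sum_fin_ite_val_eq (m : ℕ) (c : ℤ) :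
    ∑ j : Fin (n + 1), (if (j : ℕ) = m then c else 0) = if m < n + 1 then c else 0 := by
  rw [Fin.sum_univ_eq_sum_range (fun j => if j = m then c else 0), Finset.sum_ite_eq']
  simp only [Finset.mem_range]

/-- The diagonal entry minus the weights of the edges at `i`, the edge `x₀x₁` having
weight `2`. -/
lemma sum_cGram_row (i : Fin (n + 1)) :
    ∑ j, CGram n a i j = (if (i : ℕ) = 0 then 4 else a i)
      - (if (i : ℕ) < n then (if (i : ℕ) = 0 then 2 else 1) else 0)
      - (if (i : ℕ) = 0 then 0 else if (i : ℕ) = 1 then 2 else 1) := by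
  have hsplit : ∀ j : Fin (n + 1), CGram n a i j =
      (if (j : ℕ) = i then (if (i : ℕ) = 0 then 4 else a i) else 0)
      - (if (j : ℕ) = i + 1 then (if (i : ℕ) = 0 then 2 else 1) else 0)
      - (if (j : ℕ) = i - 1 then (if (i : ℕ) = 0 then 0 else if (i : ℕ) = 1 then 2 else 1)
          else 0) := by
    intro j
    unfold CGram
    split_ifs <;> omega
  simp only [hsplit, Finset.sum_sub_distrib, sum_fin_ite_val_eq]
  have := i.is_lt
  split_ifs <;> omega

lemma sum_cGram_row_nonneg (hC : CTypeParams n a) (i : Fin (n + 1)) :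
    0 ≤ ∑ j, CGram n a i j := by
  obtain ⟨hn, ha, ha1⟩ := hC
  rw [sum_cGram_row]
  obtain ⟨_ | _ | i, hi⟩ := i
  · norm_num
    split_ifs <;> omega
  · norm_num
    split_ifs <;> omega
  · have := ha (i + 1 + 1) (by omega) (by omega)
    norm_num
    split_ifs <;> omega

lemma sum_cGram_row_zero_pos (hC : CTypeParams n a) : 0 < ∑ j, CGram n a 0 j := by
  rw [sum_cGram_row]
  have := hC.1
  split_ifs <;> simp_all

lemma sum_cGram_row_last_pos (hC : CTypeParams n a) : 0 < ∑ j, CGram n a (Fin.last n) j := by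
  obtain ⟨hn, ha, ha1⟩ := hC
  rw [sum_cGram_row]
  simp only [Fin.val_last]
  obtain _ | _ | n := n
  · omega
  · norm_num
    omega
  · have := ha (n + 1 + 1) (by omega) le_rfl
    norm_num
    omega

lemma cForm_single_single (i j : Fin (n + 1)) :
    CForm n a (Pi.single i 1) (Pi.single j 1) = CGram n a i j := by
  simp [CForm, Pi.single_apply]

end CGram

def IsOrthIndecomposable {M : Type*} [AddCommGroup M] (B : M → M → ℤ) (x : M) : Prop :=
  ∀ u v, u + v = x → B u v = 0 → u = 0 ∨ v = 0

lemma apply_eq_zero_of_add_eq_single {n : ℕ} {a : ℕ → ℤ} (hC : CTypeParams n a)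
    {k : Fin (n + 1)} {u v : Fin (n + 1) → ℤ} (huv : u + v = Pi.single k 1)
    (h : CForm n a u v = 0) {i : Fin (n + 1)} (hik : i ≠ k) : u i = 0 := by
  have hsum : ∀ i, u i + v i = (Pi.single k 1 : Fin (n + 1) → ℤ) i := fun i => by
    rw [← huv, Pi.add_apply]
  have hv : ∀ i ≠ k, v i = -u i := fun i hi => by
    have := hsum i
    rw [Pi.single_eq_of_ne hi] at this
    omega
  obtain ⟨hvert, hedge⟩ := diag_and_edge_terms_eq_zero_of_orthogonal cGram_comm
    (fun _ _ => cGram_nonpos_of_ne) (sum_cGram_row_nonneg hC)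
    (fun i => by rw [hsum]; by_cases hi : i = k <;> simp [hi]) h
  have hpos : ∀ i ≠ k, 0 < ∑ j, CGram n a i j → u i = 0 := fun i hi hr => by
    have := hvert i
    rw [hv i hi] at this
    simpa [hr.ne'] using this
  have hstep : ∀ i : Fin n, i.castSucc ≠ k → i.succ ≠ k → u i.castSucc = u i.succ :=
    fun i h₁ h₂ => by
      have hterm := (mul_eq_zero.1 (hedge i.castSucc i.succ)).resolve_left
        (cGram_castSucc_succ_neg i).ne
      rw [hv _ h₁, hv _ h₂] at hterm
      have hsq : (u i.castSucc - u i.succ) * (u i.castSucc - u i.succ) = 0 := by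
        linear_combination -hterm
      exact sub_eq_zero.1 (mul_self_eq_zero.1 hsq)
  have hbelow : ∀ i, i < k → u i = 0 := by
    intro i
    induction i using Fin.induction with
    | zero => exact fun hk => hpos 0 hk.ne (sum_cGram_row_zero_pos hC)
    | succ i ih =>
      intro hik
      have hlt : i.castSucc < k := Fin.castSucc_lt_succ.trans hik
      rw [← hstep i hlt.ne hik.ne, ih hlt]
  have habove : ∀ i, k < i → u i = 0 := by
    intro i
    induction i using Fin.reverseInduction with
    | last => exact fun hk => hpos _ hk.ne' (sum_cGram_row_last_pos hC)
    | cast i ih =>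
      intro hki
      have hlt : k < i.succ := hki.trans Fin.castSucc_lt_succ
      rw [hstep i hki.ne' hlt.ne', ih hlt]
  exact hik.lt_or_gt.elim (hbelow i) (habove i)

theorem isOrthIndecomposable_cForm_single {n : ℕ} {a : ℕ → ℤ} (hC : CTypeParams n a)
    (k : Fin (n + 1)) : IsOrthIndecomposable (CForm n a) (Pi.single k 1) := by
  intro u v huv h
  have hu : ∀ i ≠ k, u i = 0 := fun i hi => apply_eq_zero_of_add_eq_single hC huv h hi
  have hv : ∀ i ≠ k, v i = 0 := fun i hi => by
    simpa [Pi.single_eq_of_ne hi, hu i hi] using congrFun huv i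
  -- only the `(k, k)` term of the form survives
  rw [CForm, Finset.sum_eq_single k (fun i _ hi => by simp [hu i hi]) (by simp),
    Finset.sum_eq_single k (fun j _ hj => by simp [hv j hj]) (by simp),
    mul_right_comm, mul_eq_zero] at h
  rcases mul_eq_zero.1 (h.resolve_right (cGram_self_pos hC k).ne') with h | h
  · left
    funext i
    by_cases hi : i = k
    · rw [hi, h, Pi.zero_apply]
    · exact hu i hi
  · right
    funext i
    by_cases hi : i = k
    · rw [hi, h, Pi.zero_apply]
    · exact hv i hi

lemma subsingleton_of_surjective_of_basis {ι R M N : Type*} [Semiring R] [AddCommMonoid M]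
    [AddCommMonoid N] [Module R M] [Module R N] (f : M →ₗ[R] N) (hf : Function.Surjective f)
    (b : Module.Basis ι R M) (h : ∀ i, f (b i) = 0) : Subsingleton N := by
  have hf0 : f = 0 := b.ext h
  refine ⟨fun x y => ?_⟩
  obtain ⟨x, rfl⟩ := hf x
  obtain ⟨y, rfl⟩ := hf y
  simp [hf0]

section OrthogonalSum

variable {M N₁ N₂ : Type*} [AddCommGroup M] [AddCommGroup N₁] [AddCommGroup N₂]
  {B : M → M → ℤ} {B₁ : LinearMap.BilinForm ℤ N₁} {B₂ : LinearMap.BilinForm ℤ N₂}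
  {φ : M ≃ₗ[ℤ] N₁ × N₂}

lemma fst_eq_zero_or_snd_eq_zero (hφ : ∀ v w, B v w = B₁ (φ v).1 (φ w).1 + B₂ (φ v).2 (φ w).2)
    {x : M} (hx : IsOrthIndecomposable B x) : (φ x).1 = 0 ∨ (φ x).2 = 0 := by
  have hsplit : φ.symm ((φ x).1, 0) + φ.symm (0, (φ x).2) = x := by
    rw [← map_add, Prod.mk_add_mk, add_zero, zero_add, φ.symm_apply_apply]
  rcases hx _ _ hsplit (by simp [hφ]) with h | h
  · left
    simpa using congrArg (fun y => (φ y).1) h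
  · right
    simpa using congrArg (fun y => (φ y).2) h

theorem subsingleton_or_subsingleton_of_chain {n : ℕ}
    (hφ : ∀ v w, B v w = B₁ (φ v).1 (φ w).1 + B₂ (φ v).2 (φ w).2)
    (b : Module.Basis (Fin (n + 1)) ℤ M) (hb : ∀ k, IsOrthIndecomposable B (b k))
    (hchain : ∀ i : Fin n, B (b i.castSucc) (b i.succ) ≠ 0) :
    Subsingleton N₁ ∨ Subsingleton N₂ := by
  have hstep : ∀ i : Fin n, (φ (b i.castSucc)).2 = 0 ↔ (φ (b i.succ)).2 = 0 := by
    intro i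
    constructor
    · intro h
      by_contra h'
      have := (fst_eq_zero_or_snd_eq_zero hφ (hb i.succ)).resolve_right h'
      exact hchain i (by simp [hφ, h, this])
    · intro h
      by_contra h'
      have := (fst_eq_zero_or_snd_eq_zero hφ (hb i.castSucc)).resolve_right h'
      exact hchain i (by simp [hφ, h, this])
  have hall : ∀ k, (φ (b k)).2 = 0 ↔ (φ (b 0)).2 = 0 := by
    intro k
    induction k using Fin.induction with
    | zero => rfl
    | succ i ih => exact (hstep i).symm.trans ih
  by_cases h0 : (φ (b 0)).2 = 0
  · right
    exact subsingleton_of_surjective_of_basis ((LinearMap.snd ℤ N₁ N₂).comp φ.toLinearMap)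
      (Prod.snd_surjective.comp φ.surjective) b fun k => (hall k).2 h0
  · left
    exact subsingleton_of_surjective_of_basis ((LinearMap.fst ℤ N₁ N₂).comp φ.toLinearMap)
      (Prod.fst_surjective.comp φ.surjective) b
      fun k => (fst_eq_zero_or_snd_eq_zero hφ (hb k)).resolve_right fun h => h0 ((hall k).1 h)

end OrthogonalSum

/-- Corollary 3.4: every C-type lattice is indecomposable: it is not
isometric to an orthogonal direct sum of two nontrivial lattices. -/
theorem statement2 (n : ℕ) (a : ℕ → ℤ) (hC : CTypeParams n a) :
    ¬ ∃ (m₁ m₂ : ℕ) (M₁ : Fin m₁ → Fin m₁ → ℤ) (M₂ : Fin m₂ → Fin m₂ → ℤ),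
        1 ≤ m₁ ∧ 1 ≤ m₂ ∧
        (∀ i j, M₁ i j = M₁ j i) ∧ (∀ i j, M₂ i j = M₂ j i) ∧
        ∃ φ : (Fin (n + 1) → ℤ) ≃ₗ[ℤ] (Fin m₁ → ℤ) × (Fin m₂ → ℤ),
          ∀ v w : Fin (n + 1) → ℤ,
            CForm n a v w =
              (∑ i, ∑ j, (φ v).1 i * M₁ i j * (φ w).1 j) +
              (∑ i, ∑ j, (φ v).2 i * M₂ i j * (φ w).2 j) := by
  rintro ⟨m₁, m₂, M₁, M₂, hm₁, hm₂, -, -, φ, hφ⟩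
  have hφ' : ∀ v w, CForm n a v w =
      Matrix.toBilin' (.of M₁) (φ v).1 (φ w).1 + Matrix.toBilin' (.of M₂) (φ v).2 (φ w).2 := by
    simpa only [Matrix.toBilin'_apply, Matrix.of_apply] using hφ
  have hsplit := subsingleton_or_subsingleton_of_chain hφ' (Pi.basisFun ℤ (Fin (n + 1)))
    (fun k => by simpa using isOrthIndecomposable_cForm_single hC k)
    (fun i => by simpa [cForm_single_single] using (cGram_castSucc_succ_neg i).ne)
  have : Nonempty (Fin m₁) := ⟨⟨0, hm₁⟩⟩
  have : Nonempty (Fin m₂) := ⟨⟨0, hm₂⟩⟩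
  rcases hsplit with h | h <;> exact not_subsingleton _ h

end Prism
end

section
/- Let C be a C-type lattice and let [I] and [J] be two intervals in C. Then ⟨[I],[J]⟩ = |[I ∩ J]| − δ([I],[J]), where [I ∩ J] denotes the sum of the vertices in I ∩ J (interpreted as 0 with norm 0 when I ∩ J is empty). -/
namespace Prism

/-!
The Gram matrix of a C-type lattice is tridiagonal, so `⟨u, v⟩` splits into vertex terms
`u_i ⟨x_i, x_i⟩ v_i` and edge terms `-m_k (u_k v_{k+1} + u_{k+1} v_k)`, where `m_k` is the
multiplicity of the edge `x_k x_{k+1}`. For indicator vectors the vertex terms of `([I], [J])`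
and of `([I ∩ J], [I ∩ J])` coincide, since `1_I 1_J = 1_{I ∩ J}`; across an edge the values
of `u_k v_{k+1} + u_{k+1} v_k` differ by one when the edge dangles and agree otherwise.
-/

open Finset

/-- `CGram` reindexed by `ℕ`, so that neighbouring indices `k, k + 1` need no `Fin` arithmetic. -/
def cGram (a : ℕ → ℤ) (i j : ℕ) : ℤ :=
  if i = j then (if i = 0 then 4 else a i)
  else if (i = 0 ∧ j = 1) ∨ (i = 1 ∧ j = 0) then -2
  else if i + 1 = j ∨ j + 1 = i then -1
  else 0

theorem cGram_eq_zero (a : ℕ → ℤ) {i j : ℕ} (h : i + 1 < j ∨ j + 1 < i) :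
    cGram a i j = 0 := by
  unfold cGram
  split_ifs <;> omega

theorem cGram_succ_right (a : ℕ → ℤ) (k : ℕ) :
    cGram a k (k + 1) = -(if k = 0 then 2 else 1) := by
  rcases k with _ | k <;> simp [cGram]

theorem cGram_succ_left (a : ℕ → ℤ) (k : ℕ) :
    cGram a (k + 1) k = -(if k = 0 then 2 else 1) := by
  rcases k with _ | k <;> simp [cGram]

theorem sum_range_sum_range_of_tridiagonal {M : Type*} [AddCommMonoid M] (F : ℕ → ℕ → M)
    (hF : ∀ i j, i + 1 < j ∨ j + 1 < i → F i j = 0) (m : ℕ) :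
    ∑ i ∈ range (m + 1), ∑ j ∈ range (m + 1), F i j =
      ∑ i ∈ range (m + 1), F i i + ∑ k ∈ range m, (F k (k + 1) + F (k + 1) k) := by
  induction m with
  | zero => simp
  | succ m ih =>
    have hcol : ∑ i ∈ range (m + 1), F i (m + 1) = F m (m + 1) :=
      sum_eq_single_of_mem m (self_mem_range_succ m) fun i hi hne =>
        hF i (m + 1) (Or.inl (by simp only [mem_range] at hi; omega))
    have hrow : ∑ j ∈ range (m + 1), F (m + 1) j = F (m + 1) m :=
      sum_eq_single_of_mem m (self_mem_range_succ m) fun j hj hne =>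
        hF (m + 1) j (Or.inr (by simp only [mem_range] at hj; omega))
    rw [sum_range_succ (fun i => ∑ j ∈ range (m + 2), F i j), sum_range_succ (F (m + 1)),
      sum_congr rfl fun i _ => sum_range_succ (F i) (m + 1), sum_add_distrib, ih, hcol, hrow,
      sum_range_succ (fun i => F i i) (m + 1),
      sum_range_succ (fun k => F k (k + 1) + F (k + 1) k) m]
    abel

theorem CForm_eq_vertex_sum_sub_edge_sum (n : ℕ) (a : ℕ → ℤ) (u v : ℕ → ℤ) :
    CForm n a (fun i => u i) (fun i => v i) =
      ∑ i ∈ range (n + 1), u i * cGram a i i * v i -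
        ∑ k ∈ range n, (if k = 0 then 2 else 1) * (u k * v (k + 1) + u (k + 1) * v k) := by
  have hfin : CForm n a (fun i => u i) (fun i => v i) =
      ∑ i ∈ range (n + 1), ∑ j ∈ range (n + 1), u i * cGram a i j * v j := by
    simp only [CForm, ← Fin.sum_univ_eq_sum_range]
    rfl
  rw [hfin, sum_range_sum_range_of_tridiagonal _
    (fun i j h => by rw [cGram_eq_zero a h, mul_zero, zero_mul])]
  simp only [cGram_succ_right, cGram_succ_left, sub_eq_add_neg, ← sum_neg_distrib]
  congr 1
  exact sum_congr rfl fun k _ => by ring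

/-- The indicator of `[a, b] ⊆ ℕ`; `intVec n a b` is its restriction to `Fin (n + 1)`. -/
def intInd (a b i : ℕ) : ℤ := if a ≤ i ∧ i ≤ b then 1 else 0

theorem intInd_mul_intInd (a b c d i : ℕ) :
    intInd a b i * intInd c d i = intInd (max a c) (min b d) i := by
  simp only [intInd, ite_zero_mul_ite_zero, mul_one, max_le_iff, le_min_iff]
  congr 1
  exact propext (by tauto)

/-- Across the edge `{k, k+1}`, the pairing of `[a, b]` with `[c, d]` exceeds the self-pairing of
their intersection by one exactly when the edge dangles. -/
theorem intInd_edge_pairing (a b c d k : ℕ) :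
    intInd a b k * intInd c d (k + 1) + intInd a b (k + 1) * intInd c d k =
      intInd (max a c) (min b d) k * intInd (max a c) (min b d) (k + 1) +
          intInd (max a c) (min b d) (k + 1) * intInd (max a c) (min b d) k +
        if (((a ≤ k ∧ k ≤ b) ∧ (c ≤ k + 1 ∧ k + 1 ≤ d)) ∨
              ((c ≤ k ∧ k ≤ d) ∧ (a ≤ k + 1 ∧ k + 1 ≤ b))) ∧
            (¬((a ≤ k ∧ k ≤ b) ∧ (c ≤ k ∧ k ≤ d)) ∨
              ¬((a ≤ k + 1 ∧ k + 1 ≤ b) ∧ (c ≤ k + 1 ∧ k + 1 ≤ d)))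
        then 1 else 0 := by
  unfold intInd
  split_ifs <;> omega

theorem statement5_general (n : ℕ) (aa : ℕ → ℤ) (a b c d : ℕ) :
    CForm n aa (intVec n a b) (intVec n c d) =
      CForm n aa (intVec n (max a c) (min b d)) (intVec n (max a c) (min b d)) -
        deltaCount n a b c d := by
  set w := intInd (max a c) (min b d)
  have hdiag : ∀ i, intInd a b i * cGram aa i i * intInd c d i = w i * cGram aa i i * w i :=
    fun i => calc
      _ = w i * cGram aa i i := by rw [mul_right_comm, intInd_mul_intInd]
      _ = w i * cGram aa i i * w i := by
        rw [mul_right_comm, intInd_mul_intInd, max_self, min_self]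
  have hedges : ∑ k ∈ range n, (if k = 0 then 2 else 1) *
        (intInd a b k * intInd c d (k + 1) + intInd a b (k + 1) * intInd c d k) =
      ∑ k ∈ range n, (if k = 0 then 2 else 1) * (w k * w (k + 1) + w (k + 1) * w k) +
        deltaCount n a b c d := by
    rw [deltaCount, ← sum_add_distrib]
    refine sum_congr rfl fun k _ => ?_
    rw [intInd_edge_pairing]
    split_ifs <;> ring
  change CForm n aa (fun i => intInd a b i) (fun i => intInd c d i) =
    CForm n aa (fun i => w i) (fun i => w i) - deltaCount n a b c d
  rw [CForm_eq_vertex_sum_sub_edge_sum, CForm_eq_vertex_sum_sub_edge_sum,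
    sum_congr rfl fun i _ => hdiag i, hedges]
  ring

/-- Lemma 3.9: for intervals `[I] = [a,b]` and `[J] = [c,d]`,
`⟨[I],[J]⟩ = |[I ∩ J]| - δ([I],[J])`. Here `I ∩ J = [max a c, min b d]`, whose interval
vector is `0` (of norm `0`) when the intersection is empty. -/
theorem statement5 (n : ℕ) (aa : ℕ → ℤ) (hC : CTypeParams n aa)
    (a b c d : ℕ) (hab : a ≤ b) (hb : b ≤ n) (hcd : c ≤ d) (hd : d ≤ n) :
    CForm n aa (intVec n a b) (intVec n c d) =
      CForm n aa (intVec n (max a c) (min b d)) (intVec n (max a c) (min b d)) -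
        deltaCount n a b c d :=
  statement5_general n aa a b c d

end Prism
end

section
/- Let C be a C-type lattice and let [I], [J] be intervals in C. Then δ([I],[J]) ∈ {0, 1, 2, 3}. Moreover, if δ([I],[J]) = 3, then ⟨x_0,[I]⟩ = −⟨x_0,[J]⟩ and this common absolute value is 2 (i.e. ⟨x_0,[I]⟩ = ±2 and ⟨x_0,[J]⟩ = ∓2). -/
namespace Prism

/-! Intervals are subpaths of the path `x_0 — x_1 — ⋯ — x_n`, and an edge dangles only where
one of two subpaths stops and the other goes on, so at most two distinct edges dangle.
Since only the doubled edge `x_0x_1` has weight two, `δ = 3` forces it to dangle together with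
one more edge; then one interval starts at `x_0` and the other at `x_1`, and both pass through
`x_1`. As `⟨x_0, v⟩ = 4 v_0 - 2 v_1`, the two pairings are `4 - 2 = 2` and `-2`. -/

open Finset

/-- The edge `x_k x_{k+1}` dangles for the intervals `[a,b]` and `[c,d]`. -/
abbrev IsDangling (a b c d k : ℕ) : Prop :=
  (((a ≤ k ∧ k ≤ b) ∧ (c ≤ k + 1 ∧ k + 1 ≤ d)) ∨
      ((c ≤ k ∧ k ≤ d) ∧ (a ≤ k + 1 ∧ k + 1 ≤ b))) ∧
    (¬((a ≤ k ∧ k ≤ b) ∧ (c ≤ k ∧ k ≤ d)) ∨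
      ¬((a ≤ k + 1 ∧ k + 1 ≤ b) ∧ (c ≤ k + 1 ∧ k + 1 ≤ d)))

theorem deltaCount_eq_card_add (n a b c d : ℕ) :
    deltaCount n a b c d =
      #{k ∈ range n | IsDangling a b c d k} +
        if 0 ∈ {k ∈ range n | IsDangling a b c d k} then 1 else 0 := by
  have hweight : ∀ k : ℕ, (if k = 0 then (2 : ℤ) else 1) = 1 + if k = 0 then 1 else 0 := by
    intro k; split_ifs <;> norm_num
  rw [deltaCount, ← sum_filter, sum_congr rfl fun k _ => hweight k, sum_add_distrib,
    sum_const, nsmul_one, sum_ite_eq']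

theorem card_filter_isDangling_le_two (s : Finset ℕ) (a b c d : ℕ) :
    #{k ∈ s | IsDangling a b c d k} ≤ 2 := by
  by_contra! h
  obtain ⟨k₁, k₂, k₃, h₁, h₂, h₃, h₁₂, h₁₃, h₂₃⟩ := two_lt_card_iff.mp h
  simp only [mem_filter] at h₁ h₂ h₃
  omega

theorem isDangling_zero_and_pos {a b c d k : ℕ} (h₀ : IsDangling a b c d 0)
    (hk : IsDangling a b c d k) (hk₀ : k ≠ 0) :
    (a = 0 ∧ c = 1 ∧ 1 ≤ b ∧ 1 ≤ d) ∨ (c = 0 ∧ a = 1 ∧ 1 ≤ d ∧ 1 ≤ b) := by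
  omega

theorem cForm_single_zero {n : ℕ} (hn : 1 ≤ n) (aa : ℕ → ℤ) (v : Fin (n + 1) → ℤ) :
    CForm n aa (Pi.single 0 1) v = 4 * v 0 - 2 * v ⟨1, by omega⟩ := by
  obtain ⟨m, rfl⟩ : ∃ m, n = m + 1 := ⟨n - 1, by omega⟩
  simp [CForm, CGram, Fin.sum_univ_succ, Pi.single_apply, sub_eq_add_neg]

theorem statement7_general (n : ℕ) (aa : ℕ → ℤ)
    (a b c d : ℕ) :
    (deltaCount n a b c d = 0 ∨ deltaCount n a b c d = 1 ∨
      deltaCount n a b c d = 2 ∨ deltaCount n a b c d = 3) ∧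
    (deltaCount n a b c d = 3 →
      CForm n aa (Pi.single 0 1) (intVec n a b) =
        -CForm n aa (Pi.single 0 1) (intVec n c d) ∧
      (CForm n aa (Pi.single 0 1) (intVec n a b) = 2 ∨
        CForm n aa (Pi.single 0 1) (intVec n a b) = -2)) := by
  have hδ := deltaCount_eq_card_add n a b c d
  have hcard := card_filter_isDangling_le_two (range n) a b c d
  refine ⟨by split_ifs at hδ <;> omega, fun h3 => ?_⟩
  obtain ⟨h₀, k, hk, hk₀⟩ : 0 ∈ {k ∈ range n | IsDangling a b c d k} ∧
      ∃ k ∈ {k ∈ range n | IsDangling a b c d k}, k ≠ 0 := by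
    split_ifs at hδ with h₀
    · exact ⟨h₀, exists_mem_ne (by omega) 0⟩
    · omega
  simp only [mem_filter, mem_range] at h₀ hk
  rw [cForm_single_zero h₀.1, cForm_single_zero h₀.1]
  rcases isDangling_zero_and_pos h₀.2 hk.2 hk₀ with ⟨rfl, rfl, hb, hd⟩ | ⟨rfl, rfl, hd, hb⟩ <;>
    simp [intVec, hb, hd]

/-- Lemma 3.11: for intervals `[I] = [a,b]` and `[J] = [c,d]`,
`δ([I],[J]) ∈ {0,1,2,3}`, and if `δ([I],[J]) = 3` then
`⟨x_0,[I]⟩ = -⟨x_0,[J]⟩ = ±2`. -/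
theorem statement7 (n : ℕ) (aa : ℕ → ℤ) (hC : CTypeParams n aa)
    (a b c d : ℕ) (hab : a ≤ b) (hb : b ≤ n) (hcd : c ≤ d) (hd : d ≤ n) :
    (deltaCount n a b c d = 0 ∨ deltaCount n a b c d = 1 ∨
      deltaCount n a b c d = 2 ∨ deltaCount n a b c d = 3) ∧
    (deltaCount n a b c d = 3 →
      CForm n aa (Pi.single 0 1) (intVec n a b) =
        -CForm n aa (Pi.single 0 1) (intVec n c d) ∧
      (CForm n aa (Pi.single 0 1) (intVec n a b) = 2 ∨
        CForm n aa (Pi.single 0 1) (intVec n a b) = -2)) :=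
  statement7_general n aa a b c d

end Prism
end

section
/- Let C be a C-type lattice (so in particular a_1 ≥ 3). Then there is no element v ∈ C with ⟨v, x_0⟩ ≠ 0 and |v| = 2. -/
namespace Prism

/-! Completing squares, the norm of `v = ∑ cᵢ xᵢ` becomes
`|v| = (2c₀ - c₁)² + ∑ᵢ (aᵢ - 2) cᵢ² + ∑ᵢ (cᵢ - cᵢ₊₁)² + cₙ²`, while `⟨v, x₀⟩ = 2 (2c₀ - c₁)`.
If `⟨v, x₀⟩ ≠ 0` and `c₁ = 0`, the first square is `4c₀² ≥ 4`. If `c₁ ≠ 0`, the first square,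
the term `(a₁ - 2) c₁²` and the telescoping tail `∑ (cᵢ - cᵢ₊₁)² + cₙ²` are each at least `1`.
So `|v| ≥ 3`. -/

open Finset

section TridiagonalForm

variable {R : Type*} [CommRing R]

theorem sum_sum_mul_mul_of_tridiagonal {g : ℕ → ℕ → R} (hsymm : ∀ i j, g i j = g j i)
    (hband : ∀ i j, i + 1 < j → g i j = 0) (f : ℕ → R) (m : ℕ) :
    ∑ i ∈ range (m + 1), ∑ j ∈ range (m + 1), f i * g i j * f j =
      ∑ i ∈ range (m + 1), g i i * f i ^ 2 + 2 * ∑ i ∈ range m, g i (i + 1) * f i * f (i + 1) := by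
  induction m with
  | zero =>
    simp only [zero_add, range_one, sum_singleton, range_zero, sum_empty, mul_zero, add_zero]
    ring
  | succ m ih =>
    have hcol : ∑ i ∈ range m, f i * g i (m + 1) * f (m + 1) = 0 :=
      sum_eq_zero fun i hi => by rw [hband i _ (by rw [mem_range] at hi; omega)]; ring
    have hrow : ∑ j ∈ range m, f (m + 1) * g (m + 1) j * f j = 0 :=
      sum_eq_zero fun j hj => by rw [hsymm, hband j _ (by rw [mem_range] at hj; omega)]; ring
    simp only [sum_range_succ _ (m + 1), sum_add_distrib, ih]
    rw [sum_range_succ (fun i => f i * g i (m + 1) * f (m + 1)),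
      sum_range_succ (fun j => f (m + 1) * g (m + 1) j * f j) m,
      sum_range_succ (fun i => g i (i + 1) * f i * f (i + 1)), hcol, hrow, hsymm (m + 1) m]
    ring

theorem sum_mul_sq_sub_two_mul_sum_mul_succ (d f : ℕ → R) (N : ℕ) :
    ∑ i ∈ range (N + 1), d i * f i ^ 2 - 2 * ∑ i ∈ range N, f i * f (i + 1) =
      f 0 ^ 2 + f N ^ 2 + ∑ i ∈ range N, (f i - f (i + 1)) ^ 2 +
        ∑ i ∈ range (N + 1), (d i - 2) * f i ^ 2 := by
  induction N with
  | zero =>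
    simp only [zero_add, range_one, sum_singleton, range_zero, sum_empty, mul_zero, sub_zero, add_zero]
    ring
  | succ N ih =>
    rw [sum_range_succ (fun i => d i * f i ^ 2) (N + 1), sum_range_succ (fun i => f i * f (i + 1)) N,
      sum_range_succ (fun i => (f i - f (i + 1)) ^ 2) N,
      sum_range_succ (fun i => (d i - 2) * f i ^ 2) (N + 1)]
    linear_combination ih

end TridiagonalForm

def cGramEntry (a : ℕ → ℤ) (i j : ℕ) : ℤ :=
  if i = j then (if i = 0 then 4 else a i)
  else if (i = 0 ∧ j = 1) ∨ (i = 1 ∧ j = 0) then -2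
  else if i + 1 = j ∨ j + 1 = i then -1
  else 0

theorem CGram_apply (n : ℕ) (a : ℕ → ℤ) (i j : Fin (n + 1)) :
    CGram n a i j = cGramEntry a i j := rfl

theorem cGramEntry_comm (a : ℕ → ℤ) (i j : ℕ) : cGramEntry a i j = cGramEntry a j i := by
  unfold cGramEntry
  split_ifs <;> first | rfl | omega | (subst_vars; rfl)

theorem cGramEntry_of_add_one_lt (a : ℕ → ℤ) {i j : ℕ} (h : i + 1 < j) : cGramEntry a i j = 0 := by
  unfold cGramEntry; rw [if_neg (by omega), if_neg (by omega), if_neg (by omega)]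

theorem CForm_single_zero (N : ℕ) (a : ℕ → ℤ) (v : Fin (N + 2) → ℤ) :
    CForm (N + 1) a v (Pi.single 0 1) = 4 * v 0 - 2 * v 1 := by
  simp [CForm, Pi.single_apply, Fin.sum_univ_succ, CGram, sub_eq_add_neg, mul_comm]

theorem CForm_restrict (n : ℕ) (a : ℕ → ℤ) (f h : ℕ → ℤ) :
    CForm n a (fun i => f i) (fun i => h i) =
      ∑ i ∈ range (n + 1), ∑ j ∈ range (n + 1), f i * cGramEntry a i j * h j := by
  simp only [CForm, CGram_apply, Finset.sum_range]

theorem cGramEntry_zero_zero (a : ℕ → ℤ) : cGramEntry a 0 0 = 4 := rfl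

theorem cGramEntry_zero_one (a : ℕ → ℤ) : cGramEntry a 0 1 = -2 := rfl

theorem cGramEntry_succ_self (a : ℕ → ℤ) (i : ℕ) : cGramEntry a (i + 1) (i + 1) = a (i + 1) := by
  simp [cGramEntry]

theorem cGramEntry_succ_succ (a : ℕ → ℤ) (i : ℕ) : cGramEntry a (i + 1) (i + 1 + 1) = -1 := by
  simp [cGramEntry]

theorem CForm_restrict_self (N : ℕ) (a : ℕ → ℤ) (f : ℕ → ℤ) :
    CForm (N + 1) a (fun i => f i) (fun i => f i) =
      (2 * f 0 - f 1) ^ 2 + f (N + 1) ^ 2 + ∑ i ∈ range N, (f (i + 1) - f (i + 2)) ^ 2 +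
        ∑ i ∈ range (N + 1), (a (i + 1) - 2) * f (i + 1) ^ 2 := by
  rw [CForm_restrict, sum_sum_mul_mul_of_tridiagonal (cGramEntry_comm a)
    (fun _ _ => cGramEntry_of_add_one_lt a), sum_range_succ' _ (N + 1),
    sum_range_succ' (fun i => cGramEntry a i (i + 1) * f i * f (i + 1))]
  simp only [cGramEntry_succ_self, cGramEntry_succ_succ, zero_add, cGramEntry_zero_zero,
    cGramEntry_zero_one, neg_mul, one_mul, sum_neg_distrib]
  linear_combination sum_mul_sq_sub_two_mul_sum_mul_succ (fun i => a (i + 1)) (fun i => f (i + 1)) N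

theorem one_le_sq_add_sum_sq_sub {f : ℕ → ℤ} (h0 : f 0 ≠ 0) (N : ℕ) :
    1 ≤ f N ^ 2 + ∑ i ∈ range N, (f i - f (i + 1)) ^ 2 := by
  induction N with
  | zero => simpa using Int.one_le_abs h0
  | succ N ih =>
    rw [sum_range_succ]
    rcases eq_or_ne (f (N + 1)) 0 with h | h
    · rw [h]; linarith
    · have : 0 < f (N + 1) ^ 2 := by positivity
      have : 0 ≤ ∑ i ∈ range N, (f i - f (i + 1)) ^ 2 := sum_nonneg fun _ _ => sq_nonneg _
      nlinarith [sq_nonneg (f N - f (N + 1))]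

theorem three_le_CForm_self {n : ℕ} {a : ℕ → ℤ} (hC : CTypeParams n a) {v : Fin (n + 1) → ℤ}
    (hv : CForm n a v (Pi.single 0 1) ≠ 0) : 3 ≤ CForm n a v v := by
  obtain ⟨hn, ha, ha1⟩ := hC
  obtain ⟨N, rfl⟩ : ∃ N, n = N + 1 := ⟨n - 1, by omega⟩
  obtain ⟨f, rfl⟩ : ∃ f : ℕ → ℤ, v = fun i : Fin (N + 2) => f i :=
    ⟨fun k => if h : k < N + 2 then v ⟨k, h⟩ else 0, by funext i; simp [i.isLt]⟩
  rw [CForm_single_zero, Fin.val_zero, Fin.val_one] at hv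
  rw [CForm_restrict_self, sum_range_succ']
  have hdiff : 0 ≤ ∑ i ∈ range N, (f (i + 1) - f (i + 2)) ^ 2 :=
    sum_nonneg fun _ _ => sq_nonneg _
  have htail : 0 ≤ ∑ i ∈ range N, (a (i + 1 + 1) - 2) * f (i + 1 + 1) ^ 2 :=
    sum_nonneg fun i hi =>
      mul_nonneg (by linarith [ha (i + 2) (by omega) (by rw [mem_range] at hi; omega)]) (sq_nonneg _)
  have hs : 2 * f 0 - f 1 ≠ 0 := by omega
  rcases eq_or_ne (f 1) 0 with h1 | h1
  · have : f 0 ≠ 0 := by omega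
    have : 0 < f 0 ^ 2 := by positivity
    rw [h1]
    nlinarith [sq_nonneg (f (N + 1))]
  · have := one_le_sq_add_sum_sq_sub (f := fun i => f (i + 1)) h1 N
    have : 0 < (2 * f 0 - f 1) ^ 2 := by positivity
    have : 0 < f 1 ^ 2 := by positivity
    nlinarith

/-- Lemma 4.10: in a C-type lattice (where `a_1 ≥ 3`), there is no
element `v` with `⟨v, x_0⟩ ≠ 0` and `|v| = 2`. -/
theorem statement8 (n : ℕ) (a : ℕ → ℤ) (hC : CTypeParams n a) :
    ¬ ∃ v : Fin (n + 1) → ℤ,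
        CForm n a v (Pi.single 0 1) ≠ 0 ∧ CForm n a v v = 2 := by
  rintro ⟨v, hv, hv2⟩
  have := three_le_CForm_self hC hv
  omega

end Prism
end

section
/- Let n ≥ 1 and let σ = (σ_0, …, σ_{n+1}) ∈ ℤ^{n+2} be a changemaker vector such that (σ)^⊥ is isometric to a C-type lattice C with vertex basis x_0, …, x_n; fix such an isometry φ. Then σ_0 = 1, and there exist indices 0 < k_1 < k_2 < k_3 ≤ n+1 such that φ(x_0) or −φ(x_0) equals e_0 + e_{k_1} + e_{k_2} − e_{k_3} or e_0 − e_{k_1} − e_{k_2} + e_{k_3}. -/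
namespace Prism

/-! Completing the square, the C-type form is
`⟨c, c⟩ = (2c₀ - c₁)² + (P(c₁, …, cₙ) - c₁²)`, where `P` is the form of the linear lattice with
weights `a₁, …, aₙ ≥ 2`. Induction along the chain gives `P ≥ c₁²`, strictly if `c₁ ≠ 0`,
`P ≥ c₁² + 2` if moreover `a₁ ≥ 3`, and `P ≠ 1`. Hence the lattice has no vector of norm `1` and
its norm-`2` vectors have even `c₁`; as `⟨x₀, c⟩ = 4c₀ - 2c₁`, the pairing of `x₀` with any vector
is even, and with a norm-`2` vector divisible by `4`.

In `(σ)^⊥` this gives `σ₀ = 1` (else `e₀` or the changemaker condition at `1` fails).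
`v = φ(x₀)` has norm `4`, so `v = ±2eₖ` (impossible as `σₖ > 0`) or `v` has four entries `±1`.
Pairing with `σᵢe₀ - eᵢ` shows `vᵢ ≡ σᵢv₀ mod 2`, so `v₀ = ±1`. Pairing with `eᵢ - eⱼ` shows
`vᵢ = vⱼ` whenever `σᵢ = σⱼ`, and with `⟨v, σ⟩ = 0` and the monotonicity of `σ` this leaves only
the two sign patterns of the statement. -/

def pathGram (b : ℕ → ℤ) (i j : ℕ) : ℤ :=
  if i = j then b i else if i + 1 = j ∨ j + 1 = i then -1 else 0

def pathForm (m : ℕ) (b : ℕ → ℤ) (c : Fin m → ℤ) : ℤ :=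
  ∑ i : Fin m, ∑ j : Fin m, c i * pathGram b i j * c j

lemma pathForm_one (b : ℕ → ℤ) (c : Fin 1 → ℤ) : pathForm 1 b c = b 0 * c 0 ^ 2 := by
  simp [pathForm, pathGram]
  ring

lemma pathForm_succ_succ (m : ℕ) (b : ℕ → ℤ) (c : Fin (m + 2) → ℤ) :
    pathForm (m + 2) b c =
      b 0 * c 0 ^ 2 - 2 * (c 0 * c 1) + pathForm (m + 1) (fun i => b (i + 1)) (Fin.tail c) := by
  unfold pathForm
  simp only [Fin.sum_univ_succ (n := m + 1)]
  simp [pathGram, Fin.tail, Finset.sum_add_distrib]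
  ring

lemma CGram_zero_succ (m : ℕ) (a : ℕ → ℤ) (j : Fin (m + 1)) :
    CGram (m + 1) a 0 j.succ = if j = 0 then -2 else 0 := by
  by_cases hj : j = 0 <;> simp [CGram, hj]

lemma CGram_succ_zero (m : ℕ) (a : ℕ → ℤ) (i : Fin (m + 1)) :
    CGram (m + 1) a i.succ 0 = if i = 0 then -2 else 0 := by
  by_cases hi : i = 0 <;> simp [CGram, hi]

lemma CGram_succ_succ (m : ℕ) (a : ℕ → ℤ) (i j : Fin (m + 1)) :
    CGram (m + 1) a i.succ j.succ = pathGram (fun k => a (k + 1)) i j := by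
  simp [CGram, pathGram]

lemma CForm_self_eq (m : ℕ) (a : ℕ → ℤ) (c : Fin (m + 2) → ℤ) :
    CForm (m + 1) a c c =
      4 * c 0 ^ 2 - 4 * (c 0 * c 1) + pathForm (m + 1) (fun i => a (i + 1)) (Fin.tail c) := by
  unfold CForm pathForm
  simp only [Fin.sum_univ_succ (n := m + 1), CGram_zero_succ, CGram_succ_zero, CGram_succ_succ]
  simp [CGram, Fin.tail, Finset.sum_add_distrib]
  ring

lemma CForm_single_zero_left (m : ℕ) (a : ℕ → ℤ) (c : Fin (m + 2) → ℤ) :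
    CForm (m + 1) a (Pi.single 0 1) c = 4 * c 0 - 2 * c 1 := by
  simp [CForm, CGram, Fin.sum_univ_succ]
  ring

lemma pathForm_lower_bound (m : ℕ) (b : ℕ → ℤ) (hb : ∀ i ≤ m, 2 ≤ b i) (c : Fin (m + 1) → ℤ) :
    c 0 ^ 2 ≤ pathForm (m + 1) b c ∧ (c 0 ≠ 0 → c 0 ^ 2 < pathForm (m + 1) b c) := by
  induction m generalizing b with
  | zero =>
    rw [pathForm_one]
    have hb0 := hb 0 le_rfl
    exact ⟨by nlinarith [sq_nonneg (c 0)], fun hc => by nlinarith [sq_pos_of_ne_zero hc]⟩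
  | succ m ih =>
    obtain ⟨hge, hgt⟩ := ih (fun i => b (i + 1)) (fun i hi => hb (i + 1) (by omega)) (Fin.tail c)
    have hb0 := hb 0 (Nat.zero_le _)
    change c 1 ^ 2 ≤ _ at hge
    change c 1 ≠ 0 → c 1 ^ 2 < _ at hgt
    rw [pathForm_succ_succ]
    refine ⟨by nlinarith [sq_nonneg (c 0 - c 1)], fun hc => ?_⟩
    by_cases hc1 : c 1 = 0
    · rw [hc1] at hge ⊢
      nlinarith [sq_pos_of_ne_zero hc]
    · nlinarith [hgt hc1, sq_nonneg (c 0 - c 1)]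

lemma pathForm_ne_one (m : ℕ) (b : ℕ → ℤ) (hb : ∀ i ≤ m, 2 ≤ b i) (c : Fin (m + 1) → ℤ) :
    pathForm (m + 1) b c ≠ 1 := by
  by_cases hc : c 0 = 0
  · cases m with
    | zero => simp [pathForm_one, hc]
    | succ m =>
      rw [pathForm_succ_succ, hc]
      simpa using pathForm_ne_one m _ (fun i hi => hb (i + 1) (by omega)) (Fin.tail c)
  · have := (pathForm_lower_bound m b hb c).2 hc
    nlinarith [sq_pos_of_ne_zero hc]

lemma pathForm_ge_of_three_le (m : ℕ) (b : ℕ → ℤ) (hb : ∀ i ≤ m, 2 ≤ b i) (hb0 : 3 ≤ b 0)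
    (c : Fin (m + 1) → ℤ) (hc : c 0 ≠ 0) : c 0 ^ 2 + 2 ≤ pathForm (m + 1) b c := by
  have hc2 := sq_pos_of_ne_zero hc
  cases m with
  | zero => rw [pathForm_one]; nlinarith
  | succ m =>
    obtain ⟨hge, hgt⟩ :=
      pathForm_lower_bound m (fun i => b (i + 1)) (fun i hi => hb (i + 1) (by omega)) (Fin.tail c)
    change c 1 ^ 2 ≤ _ at hge
    change c 1 ≠ 0 → c 1 ^ 2 < _ at hgt
    rw [pathForm_succ_succ]
    by_cases hc1 : c 1 = 0
    · rw [hc1] at hge ⊢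
      nlinarith
    · nlinarith [hgt hc1, sq_nonneg (c 0 - c 1)]

section CType

variable {m : ℕ} {a : ℕ → ℤ}

lemma CForm_self_ge_of_ne_zero (hC : CTypeParams (m + 1) a) (c : Fin (m + 2) → ℤ)
    (hc : c 1 ≠ 0) : (2 * c 0 - c 1) ^ 2 + 2 ≤ CForm (m + 1) a c c := by
  have hpath := pathForm_ge_of_three_le m (fun i => a (i + 1))
    (fun i hi => hC.2.1 (i + 1) (by omega) (by omega)) hC.2.2 (Fin.tail c) hc
  change c 1 ^ 2 + 2 ≤ _ at hpath
  rw [CForm_self_eq]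
  nlinarith

lemma CForm_self_ne_one (hC : CTypeParams (m + 1) a) (c : Fin (m + 2) → ℤ) :
    CForm (m + 1) a c c ≠ 1 := by
  by_cases hc : c 1 = 0
  · have hb : ∀ i ≤ m, 2 ≤ a (i + 1) := fun i hi => hC.2.1 (i + 1) (by omega) (by omega)
    have hpath := (pathForm_lower_bound m _ hb (Fin.tail c)).1
    change c 1 ^ 2 ≤ _ at hpath
    rw [CForm_self_eq, hc]
    by_cases hc0 : c 0 = 0
    · simpa [hc0] using pathForm_ne_one m _ hb (Fin.tail c)
    · nlinarith [sq_pos_of_ne_zero hc0]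
  · nlinarith [CForm_self_ge_of_ne_zero hC c hc, sq_nonneg (2 * c 0 - c 1)]

lemma even_of_CForm_self_eq_two (hC : CTypeParams (m + 1) a) (c : Fin (m + 2) → ℤ)
    (h : CForm (m + 1) a c c = 2) : Even (c 1) := by
  rcases Int.even_or_odd (c 1) with heven | ⟨t, ht⟩
  · exact heven
  · have hodd : 2 * c 0 - c 1 ≠ 0 := by omega
    nlinarith [CForm_self_ge_of_ne_zero hC c (by omega), sq_pos_of_ne_zero hodd]

end CType

lemma IsChangemaker.apply_zero_le_one {m : ℕ} {σ : Fin (m + 1) → ℤ}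
    (hσ : IsChangemaker (m + 1) σ) : σ 0 ≤ 1 := by
  obtain ⟨hmono, hnonneg, hsubset⟩ := hσ
  by_contra! h
  have hsum : 1 ≤ ∑ i, σ i :=
    h.le.trans (Finset.single_le_sum (fun i _ => hnonneg i) (Finset.mem_univ 0))
  obtain ⟨S, hS⟩ := hsubset 1 zero_le_one hsum
  obtain rfl | ⟨i, hi⟩ := S.eq_empty_or_nonempty
  · simp at hS
  · have := Finset.single_le_sum (fun i _ => hnonneg i) hi
    have := hmono (Fin.zero_le i)
    omega

lemma dotF_eq_dotProduct {m : ℕ} (v w : Fin m → ℤ) : dotF v w = v ⬝ᵥ w := rfl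

lemma mem_perp_iff {m : ℕ} {σ w : Fin m → ℤ} : w ∈ perp σ ↔ w ⬝ᵥ σ = 0 := Iff.rfl

section NormFour

variable {m : ℕ} {σ v : Fin (m + 1) → ℤ}

lemma dotProduct_self_eq_card (hv : ∀ i, v i = -1 ∨ v i = 0 ∨ v i = 1) :
    v ⬝ᵥ v = (Finset.univ.filter (v · ≠ 0)).card := by
  rw [Finset.natCast_card_filter, dotProduct]
  refine Finset.sum_congr rfl fun i _ => ?_
  rcases hv i with h | h | h <;> simp [h]

lemma apply_eq_neg_one_or_zero_or_one (hσ : ∀ i, 0 < σ i) (hv : v ⬝ᵥ σ = 0)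
    (hvv : v ⬝ᵥ v = 4) (i : Fin (m + 1)) : v i = -1 ∨ v i = 0 ∨ v i = 1 := by
  by_contra! h
  have hi : 4 ≤ v i * v i := by
    rcases (by omega : v i ≤ -2 ∨ 2 ≤ v i) with h | h <;> nlinarith
  have hsplit := Finset.add_sum_erase Finset.univ (fun j => v j * v j) (Finset.mem_univ i)
  have hrest : ∀ j ∈ Finset.univ.erase i, v j * v j = 0 := by
    refine (Finset.sum_eq_zero_iff_of_nonneg fun j _ => mul_self_nonneg (v j)).1 ?_
    have := Finset.sum_nonneg fun j (_ : j ∈ Finset.univ.erase i) => mul_self_nonneg (v j)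
    rw [dotProduct] at hvv
    linarith
  have hsingle : v = Pi.single i (v i) := by
    funext j
    by_cases hj : j = i
    · simp [hj]
    · simpa [hj] using hrest j (by simp [hj])
  rw [hsingle, single_dotProduct] at hv
  rcases mul_eq_zero.1 hv with h' | h'
  · simp [h'] at hi
  · exact (hσ i).ne' h'

lemma exists_eq_single_add_single_add_single_add_single
    (hv : ∀ i, v i = -1 ∨ v i = 0 ∨ v i = 1) (hvv : v ⬝ᵥ v = 4) (hv0 : v 0 ≠ 0) :
    ∃ x y z : Fin (m + 1), 0 < x ∧ x < y ∧ y < z ∧ v x ≠ 0 ∧ v y ≠ 0 ∧ v z ≠ 0 ∧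
      v = Pi.single 0 (v 0) + Pi.single x (v x) + Pi.single y (v y) + Pi.single z (v z) := by
  set T := Finset.univ.filter (v · ≠ 0)
  have h0T : 0 ∈ T := by simpa [T] using hv0
  have hcard : (T.erase 0).card = 3 := by
    have hT : (T.card : ℤ) = 4 := (dotProduct_self_eq_card hv).symm.trans hvv
    rw [Finset.card_erase_of_mem h0T]
    omega
  set f := (T.erase 0).orderEmbOfFin hcard
  have hf : ∀ k, f k ≠ 0 ∧ v (f k) ≠ 0 := fun k => by
    have := (T.erase 0).orderEmbOfFin_mem hcard k
    simp only [T, Finset.mem_erase, Finset.mem_filter] at this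
    exact ⟨this.1, this.2.2⟩
  have hsum : v = Pi.single 0 (v 0) + ∑ k, Pi.single (f k) (v (f k)) := by
    calc v = ∑ i ∈ T, Pi.single i (v i) := by
          rw [Finset.sum_filter_of_ne (fun i _ hi => by simpa using hi), Finset.univ_sum_single]
      _ = Pi.single 0 (v 0) + ∑ i ∈ T.erase 0, Pi.single i (v i) :=
          (Finset.add_sum_erase T _ h0T).symm
      _ = _ := by rw [← Finset.map_orderEmbOfFin_univ (T.erase 0) hcard, Finset.sum_map]; rfl
  refine ⟨f 0, f 1, f 2, Fin.pos_of_ne_zero (hf 0).1, f.strictMono (by decide),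
    f.strictMono (by decide), (hf 0).2, (hf 1).2, (hf 2).2, ?_⟩
  rw [Fin.sum_univ_three, ← add_assoc, ← add_assoc] at hsum
  exact hsum

lemma exists_sign_pattern_of_apply_zero_eq_one (hmono : Monotone σ) (hσ0 : σ 0 = 1)
    (hv : v ⬝ᵥ σ = 0) (hvv : v ⬝ᵥ v = 4) (hv1 : ∀ i, v i = -1 ∨ v i = 0 ∨ v i = 1)
    (hpair : ∀ i j, σ i = σ j → 4 ∣ v i - v j) (hv0 : v 0 = 1) :
    ∃ k₁ k₂ k₃ : Fin (m + 1), 0 < k₁ ∧ k₁ < k₂ ∧ k₂ < k₃ ∧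
      (v = Pi.single 0 1 + Pi.single k₁ 1 + Pi.single k₂ 1 - Pi.single k₃ 1 ∨
        v = Pi.single 0 1 - Pi.single k₁ 1 - Pi.single k₂ 1 + Pi.single k₃ 1) := by
  obtain ⟨x, y, z, h0x, hxy, hyz, hx, hy, hz, hsupp⟩ :=
    exists_eq_single_add_single_add_single_add_single hv1 hvv (by omega)
  have hdot : σ 0 + v x * σ x + v y * σ y + v z * σ z = 0 := by
    rw [hsupp] at hv
    simpa [add_dotProduct, single_dotProduct, hv0] using hv
  have hσx := hmono h0x.le
  have hσy := hmono hxy.le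
  have hσz := hmono hyz.le
  have hpxy := hpair x y
  have hpyz := hpair y z
  have hsigns : (v x = 1 ∧ v y = 1 ∧ v z = -1) ∨ (v x = -1 ∧ v y = -1 ∧ v z = 1) := by
    rcases (by have := hv1 x; omega : v x = -1 ∨ v x = 1) with h1 | h1 <;>
    rcases (by have := hv1 y; omega : v y = -1 ∨ v y = 1) with h2 | h2 <;>
    rcases (by have := hv1 z; omega : v z = -1 ∨ v z = 1) with h3 | h3 <;>
    simp only [h1, h2, h3] at hdot hpxy hpyz <;> omega
  refine ⟨x, y, z, h0x, hxy, hyz, ?_⟩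
  rw [hsupp, hv0]
  rcases hsigns with ⟨h1, h2, h3⟩ | ⟨h1, h2, h3⟩
  · left
    rw [h1, h2, h3, Pi.single_neg, ← sub_eq_add_neg]
  · right
    rw [h1, h2, h3, Pi.single_neg, Pi.single_neg, ← sub_eq_add_neg, ← sub_eq_add_neg]

lemma exists_sign_pattern_of_dotProduct_self_eq_four (hmono : Monotone σ) (hσ0 : σ 0 = 1)
    (hv : v ∈ perp σ) (hvv : v ⬝ᵥ v = 4) (heven : ∀ w ∈ perp σ, 2 ∣ v ⬝ᵥ w)
    (hfour : ∀ w ∈ perp σ, w ⬝ᵥ w = 2 → 4 ∣ v ⬝ᵥ w) :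
    ∃ k₁ k₂ k₃ : Fin (m + 1), 0 < k₁ ∧ k₁ < k₂ ∧ k₂ < k₃ ∧
      (v = Pi.single 0 1 + Pi.single k₁ 1 + Pi.single k₂ 1 - Pi.single k₃ 1 ∨
        -v = Pi.single 0 1 + Pi.single k₁ 1 + Pi.single k₂ 1 - Pi.single k₃ 1 ∨
        v = Pi.single 0 1 - Pi.single k₁ 1 - Pi.single k₂ 1 + Pi.single k₃ 1 ∨
        -v = Pi.single 0 1 - Pi.single k₁ 1 - Pi.single k₂ 1 + Pi.single k₃ 1) := by
  rw [mem_perp_iff] at hv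
  have hσpos : ∀ i, 0 < σ i := fun i => by have := hmono (Fin.zero_le i); omega
  have hv1 := apply_eq_neg_one_or_zero_or_one hσpos hv hvv
  have hpair : ∀ i j, σ i = σ j → 4 ∣ v i - v j := by
    intro i j hij
    by_cases h : i = j
    · simp [h]
    have hw : Pi.single i 1 - Pi.single j 1 ∈ perp σ := by
      simp [mem_perp_iff, sub_dotProduct, hij]
    have hww : (Pi.single i 1 - Pi.single j 1) ⬝ᵥ (Pi.single i 1 - Pi.single j 1) = (2 : ℤ) := by
      simp [h, Ne.symm h]
    simpa [dotProduct_sub] using hfour _ hw hww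
  have hv0 : v 0 ≠ 0 := by
    intro h0
    have hv_even : ∀ i, 2 ∣ v i := fun i => by
      have hw : Pi.single 0 (σ i) - Pi.single i 1 ∈ perp σ := by
        simp [mem_perp_iff, sub_dotProduct, hσ0]
      simpa [dotProduct_sub, h0] using heven _ hw
    have : v = 0 := funext fun i => by
      have := hv_even i
      have := hv1 i
      rw [Pi.zero_apply]
      omega
    simp [this] at hvv
  rcases (by have := hv1 0; omega : v 0 = 1 ∨ v 0 = -1) with h | h
  · obtain ⟨k₁, k₂, k₃, h₁, h₂, h₃, hA | hB⟩ :=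
      exists_sign_pattern_of_apply_zero_eq_one hmono hσ0 hv hvv hv1 hpair h
    exacts [⟨k₁, k₂, k₃, h₁, h₂, h₃, Or.inl hA⟩,
      ⟨k₁, k₂, k₃, h₁, h₂, h₃, Or.inr (Or.inr (Or.inl hB))⟩]
  · obtain ⟨k₁, k₂, k₃, h₁, h₂, h₃, hA | hB⟩ :=
      exists_sign_pattern_of_apply_zero_eq_one (v := -v) hmono hσ0 (by simp [hv]) (by simp [hvv])
        (fun i => by rcases hv1 i with h | h | h <;> simp [h])
        (fun i j hij => by
          rw [Pi.neg_apply, Pi.neg_apply, neg_sub_neg]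
          exact dvd_sub_comm.1 (hpair i j hij))
        (by simp [h])
    exacts [⟨k₁, k₂, k₃, h₁, h₂, h₃, Or.inr (Or.inl hA)⟩,
      ⟨k₁, k₂, k₃, h₁, h₂, h₃, Or.inr (Or.inr (Or.inr hB))⟩]

end NormFour

/-- Proposition 4.11: if `(σ)^⊥` is isometric to a C-type lattice via
`φ`, then `σ_0 = 1` and there are indices `0 < k_1 < k_2 < k_3` such that `φ(x_0)` or
`-φ(x_0)` equals `e_0 + e_{k_1} + e_{k_2} - e_{k_3}` or `e_0 - e_{k_1} - e_{k_2} + e_{k_3}`. -/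
theorem statement9 (n : ℕ) (a : ℕ → ℤ) (hC : CTypeParams n a)
    (σ : Fin (n + 2) → ℤ) (hσ : IsChangemaker (n + 2) σ)
    (φ : (Fin (n + 1) → ℤ) ≃ₗ[ℤ] perp σ)
    (hφ : ∀ v w : Fin (n + 1) → ℤ,
      CForm n a v w = dotF (φ v : Fin (n + 2) → ℤ) (φ w : Fin (n + 2) → ℤ)) :
    σ 0 = 1 ∧
      ∃ k₁ k₂ k₃ : Fin (n + 2), 0 < k₁ ∧ k₁ < k₂ ∧ k₂ < k₃ ∧
        ((φ (Pi.single 0 1) : Fin (n + 2) → ℤ) =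
            Pi.single 0 1 + Pi.single k₁ 1 + Pi.single k₂ 1 - Pi.single k₃ 1 ∨
          -(φ (Pi.single 0 1) : Fin (n + 2) → ℤ) =
            Pi.single 0 1 + Pi.single k₁ 1 + Pi.single k₂ 1 - Pi.single k₃ 1 ∨
          (φ (Pi.single 0 1) : Fin (n + 2) → ℤ) =
            Pi.single 0 1 - Pi.single k₁ 1 - Pi.single k₂ 1 + Pi.single k₃ 1 ∨
          -(φ (Pi.single 0 1) : Fin (n + 2) → ℤ) =
            Pi.single 0 1 - Pi.single k₁ 1 - Pi.single k₂ 1 + Pi.single k₃ 1) := by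
  obtain ⟨m, rfl⟩ : ∃ m, n = m + 1 := ⟨n - 1, by have := hC.1; omega⟩
  simp only [dotF_eq_dotProduct] at hφ
  have hsurj : ∀ w ∈ perp σ, ∃ c, (φ c : Fin (m + 3) → ℤ) = w :=
    fun w hw => ⟨φ.symm ⟨w, hw⟩, by simp⟩
  set v := (φ (Pi.single 0 1) : Fin (m + 3) → ℤ)
  have hσ0 : σ 0 = 1 := by
    have hσ0_ne : σ 0 ≠ 0 := fun h0 => by
      obtain ⟨c, hc⟩ := hsurj (Pi.single 0 1) (by simp [mem_perp_iff, h0])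
      exact CForm_self_ne_one hC c (by simp [hφ, hc])
    have := hσ.2.1 0
    have := hσ.apply_zero_le_one
    omega
  have heven : ∀ w ∈ perp σ, 2 ∣ v ⬝ᵥ w := by
    intro w hw
    obtain ⟨c, rfl⟩ := hsurj w hw
    rw [← hφ, CForm_single_zero_left]
    exact ⟨2 * c 0 - c 1, by ring⟩
  have hfour : ∀ w ∈ perp σ, w ⬝ᵥ w = 2 → 4 ∣ v ⬝ᵥ w := by
    intro w hw hww
    obtain ⟨c, rfl⟩ := hsurj w hw
    obtain ⟨t, ht⟩ := even_of_CForm_self_eq_two hC c (by rw [hφ, hww])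
    rw [← hφ, CForm_single_zero_left, ht]
    exact ⟨c 0 - t, by ring⟩
  have hvv : v ⬝ᵥ v = 4 := by simp [v, ← hφ, CForm_single_zero_left]
  exact ⟨hσ0, exists_sign_pattern_of_dotProduct_self_eq_four hσ.1 hσ0 (φ _).2 hvv heven hfour⟩

end Prism
end
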